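/- arXiv:2007.09978 — 4 statements merged into one kernel-verified Lean document; each statement's English description precedes it below -/
import Mathlib

section
/- Let Ψ : [0,T] → ℝ be differentiable and define Φ(t,x) := Ψ(t)·x. Then Φ satisfies the HJB equation (9), i.e. for every (t,x) ∈ [0,T) × (0,∞), −∂ₜΦ(t,x) − inf_{(h,u)∈[0,h̄]×[0,1]} { −x·(R + p·(1−u) + h)·∂ₓΦ(t,x) − w₁·h·U(t)·x + w₂·p·u·U(t)·x − κ·∫(Φ(t,x) − Φ(t, x·(1−γ)))·g(γ) dγ } = 0, if and only if Ψ satisfies the reduced ODE: for every t ∈ [0,T), −Ψ′(t) − inf_{(h,u)∈[0,h̄]×[0,1]} { −(R + κ·μ + p·(1−u) + h)·Ψ(t) − w₁·h·U(t) + w₂·p·u·U(t) } = 0, where μ := ∫ γ·g(γ) dγ. -/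
open MeasureTheory Set Pointwise

/-- Φ(t,x) := Ψ(t)·x satisfies the HJB equation (9) on [0,T) × (0,∞)
iff Ψ satisfies the reduced ODE (10) on [0,T), where μ := ∫ γ·g(γ) dγ. -/
theorem hjb_reduces_to_ode
    (T R p hbar w1 w2 w3 κ γlo γhi : ℝ)
    (U g : ℝ → ℝ)
    (hT : 0 < T) (hR : 0 < R) (hp : 0 < p) (hhbar : 0 < hbar)
    (hw1 : 0 < w1) (hw2 : 0 < w2) (hw3 : 0 < w3) (hκ : 0 < κ)
    (hγlo : 0 < γlo) (hγ : γlo < γhi) (hγhi : γhi < 1)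
    (hUlip : ∃ L, LipschitzOnWith L U (Icc 0 T))
    (hUpos : ∀ t ∈ Icc (0:ℝ) T, 0 < U t)
    (hg0 : ∀ γ, 0 ≤ g γ)
    (hgint : Integrable g)
    (hgsupp : ∀ γ, γ ∉ Icc γlo γhi → g γ = 0)
    (hgone : ∫ γ, g γ = 1)
    (Ψ : ℝ → ℝ)
    (hΨ : ∀ t ∈ Icc (0:ℝ) T, DifferentiableAt ℝ Ψ t) :
    (∀ t ∈ Ico (0:ℝ) T, ∀ x ∈ Ioi (0:ℝ),
        -(deriv (fun s => Ψ s * x) t)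
          - sInf ((fun hu : ℝ × ℝ =>
              -x * (R + p * (1 - hu.2) + hu.1) * deriv (fun y => Ψ t * y) x
                - w1 * hu.1 * U t * x + w2 * p * hu.2 * U t * x
                - κ * ∫ γ, (Ψ t * x - Ψ t * (x * (1 - γ))) * g γ) ''
              (Icc (0:ℝ) hbar ×ˢ Icc (0:ℝ) 1)) = 0)
      ↔ (∀ t ∈ Ico (0:ℝ) T,
        -(deriv Ψ t)
          - sInf ((fun hu : ℝ × ℝ =>
              -(R + κ * (∫ γ, γ * g γ) + p * (1 - hu.2) + hu.1) * Ψ t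
                - w1 * hu.1 * U t + w2 * p * hu.2 * U t) ''
              (Icc (0:ℝ) hbar ×ˢ Icc (0:ℝ) 1)) = 0) := by
  have key : ∀ t ∈ Ico (0:ℝ) T, ∀ x ∈ Ioi (0:ℝ),
      (-(deriv (fun s => Ψ s * x) t)
          - sInf ((fun hu : ℝ × ℝ =>
              -x * (R + p * (1 - hu.2) + hu.1) * deriv (fun y => Ψ t * y) x
                - w1 * hu.1 * U t * x + w2 * p * hu.2 * U t * x
                - κ * ∫ γ, (Ψ t * x - Ψ t * (x * (1 - γ))) * g γ) ''
              (Icc (0:ℝ) hbar ×ˢ Icc (0:ℝ) 1)))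
      = x * (-(deriv Ψ t)
          - sInf ((fun hu : ℝ × ℝ =>
              -(R + κ * (∫ γ, γ * g γ) + p * (1 - hu.2) + hu.1) * Ψ t
                - w1 * hu.1 * U t + w2 * p * hu.2 * U t) ''
              (Icc (0:ℝ) hbar ×ˢ Icc (0:ℝ) 1))) := by
    intro t ht x hx
    have hx0 : (0:ℝ) < x := hx
    have hd1 : deriv (fun s => Ψ s * x) t = deriv Ψ t * x :=
      deriv_mul_const (hΨ t ⟨ht.1, ht.2.le⟩) x
    have hd2 : deriv (fun y => Ψ t * y) x = Ψ t := by
      simpa using ((hasDerivAt_id x).const_mul (Ψ t)).deriv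
    have hint : (∫ γ, (Ψ t * x - Ψ t * (x * (1 - γ))) * g γ)
        = (Ψ t * x) * ∫ γ, γ * g γ := by
      have : ∀ γ : ℝ, (Ψ t * x - Ψ t * (x * (1 - γ))) * g γ = (Ψ t * x) * (γ * g γ) := by
        intro γ; ring
      simp_rw [this]
      exact integral_const_mul _ _
    have himg : ((fun hu : ℝ × ℝ =>
              -x * (R + p * (1 - hu.2) + hu.1) * deriv (fun y => Ψ t * y) x
                - w1 * hu.1 * U t * x + w2 * p * hu.2 * U t * x
                - κ * ∫ γ, (Ψ t * x - Ψ t * (x * (1 - γ))) * g γ) ''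
              (Icc (0:ℝ) hbar ×ˢ Icc (0:ℝ) 1))
        = x • ((fun hu : ℝ × ℝ =>
              -(R + κ * (∫ γ, γ * g γ) + p * (1 - hu.2) + hu.1) * Ψ t
                - w1 * hu.1 * U t + w2 * p * hu.2 * U t) ''
              (Icc (0:ℝ) hbar ×ˢ Icc (0:ℝ) 1)) := by
      rw [← Set.image_smul, Set.image_image]
      apply Set.image_congr
      intro hu _
      rw [hd2, hint]
      simp only [smul_eq_mul]
      ring
    rw [hd1, himg, Real.sInf_smul_of_nonneg hx0.le, smul_eq_mul]
    ring
  constructor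
  · intro H t ht
    have h1 := H t ht 1 (by norm_num : (1:ℝ) ∈ Ioi (0:ℝ))
    rw [key t ht 1 (by norm_num)] at h1
    linarith
  · intro H t ht x hx
    rw [key t ht x hx, H t ht, mul_zero]
end

section
/- Sediment storage trajectories are non-expansive in the initial condition: if W₁ and W₂ are sediment storage trajectories started at w₁ and w₂ respectively, then |W₁(t) − W₂(t)| ≤ |w₁ − w₂| for all t ≥ 0. -/
open Set

/-- A sediment storage trajectory started at `w`: a continuous function `W : [0,∞) → ℝ`
satisfying the integral equation `W(t) = w − S·∫₀ᵗ 1_{W(s)>0} ds` for all `t ≥ 0`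
(the Filippov solution of the discontinuous ODE `dW/dt = −S·1_{W>0}`). -/
def IsSedimentTrajectory (S w : ℝ) (W : ℝ → ℝ) : Prop :=
  ContinuousOn W (Ici 0) ∧
    ∀ t ≥ (0:ℝ), W t = w - S * ∫ s in (0:ℝ)..t, (if 0 < W s then (1:ℝ) else 0)

namespace SedimentAux

/-- The measurable surrogate indicator. -/
noncomputable def ind (W : ℝ → ℝ) (s : ℝ) : ℝ := if 0 < W (max s 0) then 1 else 0

lemma cont_comp {S w : ℝ} {W : ℝ → ℝ} (h : IsSedimentTrajectory S w W) :
    Continuous fun s => W (max s 0) := by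
  apply h.1.comp_continuous (continuous_id.max continuous_const)
  intro x; exact le_max_right x 0

lemma meas_ind {S w : ℝ} {W : ℝ → ℝ} (h : IsSedimentTrajectory S w W) :
    Measurable (ind W) := by
  have : MeasurableSet {s : ℝ | 0 < W (max s 0)} :=
    (isOpen_lt continuous_const (cont_comp h)).measurableSet
  exact Measurable.ite this measurable_const measurable_const

lemma intInt_ind {S w : ℝ} {W : ℝ → ℝ} (h : IsSedimentTrajectory S w W) (a b : ℝ) :
    IntervalIntegrable (ind W) MeasureTheory.volume a b := by
  apply IntervalIntegrable.mono_fun' (g := fun _ => (1:ℝ)) intervalIntegrable_const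
    (meas_ind h).aestronglyMeasurable
  filter_upwards with x
  unfold ind
  split_ifs <;> simp

lemma integral_eq {S w : ℝ} {W : ℝ → ℝ} (h : IsSedimentTrajectory S w W) {a : ℝ}
    (ha : 0 ≤ a) :
    (∫ s in (0:ℝ)..a, (if 0 < W s then (1:ℝ) else 0)) = ∫ s in (0:ℝ)..a, ind W s := by
  apply intervalIntegral.integral_congr
  intro s hs
  rw [uIcc_of_le ha] at hs
  unfold ind
  rw [max_eq_left hs.1]

lemma traj_eq {S w : ℝ} {W : ℝ → ℝ} (h : IsSedimentTrajectory S w W) {a : ℝ} (ha : 0 ≤ a) :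
    W a = w - S * ∫ s in (0:ℝ)..a, ind W s := by
  rw [h.2 a ha, integral_eq h ha]

lemma one_sided (S w₁ w₂ : ℝ) (hS : 0 < S) (W₁ W₂ : ℝ → ℝ)
    (h₁ : IsSedimentTrajectory S w₁ W₁) (h₂ : IsSedimentTrajectory S w₂ W₂) :
    ∀ t ≥ (0:ℝ), W₁ t - W₂ t ≤ max (w₁ - w₂) 0 := by
  intro t ht
  set M := max (w₁ - w₂) 0 with hM
  by_contra hcon
  push_neg at hcon
  -- initial values
  have hW₁0 : W₁ 0 = w₁ := by simpa using traj_eq h₁ le_rfl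
  have hW₂0 : W₂ 0 = w₂ := by simpa using traj_eq h₂ le_rfl
  have hD0 : W₁ 0 - W₂ 0 ≤ M := by rw [hW₁0, hW₂0]; exact le_max_left _ _
  -- the set of times in [0,t] where the difference is ≤ M
  set A := Icc (0:ℝ) t ∩ (fun s => W₁ s - W₂ s) ⁻¹' Iic M with hA
  have hDcont : ContinuousOn (fun s => W₁ s - W₂ s) (Icc 0 t) :=
    (h₁.1.sub h₂.1).mono (Icc_subset_Ici_self)
  have hAclosed : IsClosed A :=
    hDcont.preimage_isClosed_of_isClosed isClosed_Icc isClosed_Iic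
  have hAne : A.Nonempty := ⟨0, ⟨le_rfl, ht⟩, hD0⟩
  have hAbdd : BddAbove A := ⟨t, fun x hx => hx.1.2⟩
  set τ := sSup A with hτ
  have hτA : τ ∈ A := hAclosed.csSup_mem hAne hAbdd
  have hτ0 : 0 ≤ τ := hτA.1.1
  have hτt : τ ≤ t := hτA.1.2
  have hτM : W₁ τ - W₂ τ ≤ M := hτA.2
  have hτlt : τ < t := lt_of_le_of_ne hτt (by intro heq; rw [heq] at hτM; exact absurd hτM (not_le.2 hcon))
  -- on (τ, t], the difference exceeds M
  have hgtM : ∀ s ∈ Ioc τ t, M < W₁ s - W₂ s := by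
    intro s hs
    by_contra hle
    push_neg at hle
    have hsA : s ∈ A := ⟨⟨le_trans hτ0 hs.1.le, hs.2⟩, hle⟩
    exact absurd (le_csSup hAbdd hsA) (not_le.2 hs.1)
  -- additivity of integral
  have key : ∀ (S' w : ℝ) (V : ℝ → ℝ), IsSedimentTrajectory S' w V →
      V t = V τ - S' * ∫ s in τ..t, ind V s := by
    intro S' w V h
    have h1 := traj_eq h hτ0
    have h2 := traj_eq h (le_trans hτ0 hτt)
    have hadd : (∫ s in (0:ℝ)..τ, ind V s) + (∫ s in τ..t, ind V s)
        = ∫ s in (0:ℝ)..t, ind V s :=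
      intervalIntegral.integral_add_adjacent_intervals (intInt_ind h 0 τ) (intInt_ind h τ t)
    rw [h1, h2, ← hadd]; ring
  have k₁ := key S w₁ W₁ h₁
  have k₂ := key S w₂ W₂ h₂
  -- the integrand difference is nonnegative on Ioc τ t
  have hnn : 0 ≤ ∫ s in τ..t, (ind W₁ s - ind W₂ s) := by
    apply intervalIntegral.integral_nonneg_of_ae_restrict hτlt.le
    refine (MeasureTheory.ae_restrict_iff' measurableSet_Icc).mpr ?_
    have hne : ∀ᵐ s : ℝ, s ≠ τ := by
      refine MeasureTheory.ae_iff.2 ?_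
      simp
    filter_upwards [hne] with s hsne hsI
    have hs : s ∈ Ioc τ t := ⟨lt_of_le_of_ne hsI.1 (Ne.symm hsne), hsI.2⟩
    have hs0 : 0 ≤ s := le_trans hτ0 hs.1.le
    have hmax : max s 0 = s := max_eq_left hs0
    have hsgt := hgtM s hs
    have hMnn : (0:ℝ) ≤ M := le_max_right _ _
    unfold ind
    rw [hmax]
    split_ifs with h1 h2 h2 <;> try norm_num
    · exact absurd (by linarith : 0 < W₁ s) h1
  have hint : (∫ s in τ..t, (ind W₁ s - ind W₂ s))
      = (∫ s in τ..t, ind W₁ s) - ∫ s in τ..t, ind W₂ s :=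
    intervalIntegral.integral_sub (intInt_ind h₁ τ t) (intInt_ind h₂ τ t)
  rw [hint] at hnn
  nlinarith [hgtM t ⟨hτlt, le_rfl⟩]

end SedimentAux

/-- sediment storage trajectories are non-expansive in the initial condition. -/
theorem sediment_trajectory_nonexpansive (S w₁ w₂ : ℝ) (hS : 0 < S)
    (W₁ W₂ : ℝ → ℝ)
    (h₁ : IsSedimentTrajectory S w₁ W₁) (h₂ : IsSedimentTrajectory S w₂ W₂) :
    ∀ t ≥ (0:ℝ), |W₁ t - W₂ t| ≤ |w₁ - w₂| := by
  intro t ht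
  have hu := SedimentAux.one_sided S w₁ w₂ hS W₁ W₂ h₁ h₂ t ht
  have hl := SedimentAux.one_sided S w₂ w₁ hS W₂ W₁ h₂ h₁ t ht
  have h1 : w₁ - w₂ ≤ |w₁ - w₂| := le_abs_self _
  have h2 : w₂ - w₁ ≤ |w₁ - w₂| := by rw [abs_sub_comm]; exact le_abs_self _
  have h0 : (0:ℝ) ≤ |w₁ - w₂| := abs_nonneg _
  rw [abs_le]
  constructor
  · have := max_le h2 h0
    linarith [le_trans hl this]
  · exact le_trans hu (max_le h1 h0)
end

section
/- Uniqueness of the Filippov solution of the sediment storage dynamics: if w ≥ 0 and W is a sediment storage trajectory started at w, then W(t) = max{0, w − S·t} for all t ≥ 0. -/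
open Set

/-!
Since the integrand is at most 1, `W t ≥ w - S t`; hence `W > 0` before `T = w / S`, the
integrand is 1 there and `W` follows `w - S t` down to `W T = 0`. As the integrand is
nonnegative, `W` is antitone, so `W ≤ 0` after `T`; the integrand then vanishes and `W` stays 0.
-/

open MeasureTheory

theorem integrableOn_ite_pos_of_continuousOn {W : ℝ → ℝ} {s : Set ℝ} (hW : ContinuousOn W s)
    (hs : MeasurableSet s) (hfin : volume s < ⊤) :
    IntegrableOn (fun x => if 0 < W x then (1 : ℝ) else 0) s := by
  have hite : Measurable fun y : ℝ => if 0 < y then (1 : ℝ) else 0 :=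
    Measurable.ite measurableSet_Ioi measurable_const measurable_const
  refine IntegrableOn.of_bound hfin
    (hite.comp_aemeasurable (hW.aestronglyMeasurable hs).aemeasurable).aestronglyMeasurable 1
    (ae_of_all _ fun x => ?_)
  split_ifs <;> simp

theorem intervalIntegral_eq_of_eqOn_Ioo {f : ℝ → ℝ} {a b c : ℝ} (hab : a ≤ b)
    (h : EqOn f (fun _ => c) (Ioo a b)) : ∫ x in a..b, f x = (b - a) * c := by
  rw [intervalIntegral.integral_of_le hab, integral_Ioc_eq_integral_Ioo,
    setIntegral_congr_fun measurableSet_Ioo h, setIntegral_const, Real.volume_real_Ioo_of_le hab,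
    smul_eq_mul]

namespace IsSedimentTrajectory

variable {S w : ℝ} {W : ℝ → ℝ} {u t : ℝ}

theorem intervalIntegrable (hW : IsSedimentTrajectory S w W) (hu : 0 ≤ u) (ht : 0 ≤ t) :
    IntervalIntegrable (fun s => if 0 < W s then (1 : ℝ) else 0) volume u t :=
  (integrableOn_ite_pos_of_continuousOn (hW.1.mono (ordConnected_Ici.uIcc_subset hu ht))
    measurableSet_Icc isCompact_uIcc.measure_lt_top).intervalIntegrable

theorem eq_sub_integral (hW : IsSedimentTrajectory S w W) (hu : 0 ≤ u) (ht : 0 ≤ t) :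
    W t = W u - S * ∫ s in u..t, (if 0 < W s then (1 : ℝ) else 0) := by
  rw [hW.2 t ht, hW.2 u hu, ← intervalIntegral.integral_interval_sub_left
    (hW.intervalIntegrable le_rfl ht) (hW.intervalIntegrable le_rfl hu)]
  ring

theorem antitoneOn (hW : IsSedimentTrajectory S w W) (hS : 0 ≤ S) : AntitoneOn W (Ici 0) := by
  intro u hu t ht hut
  rw [hW.eq_sub_integral hu ht]
  have hI : 0 ≤ ∫ s in u..t, (if 0 < W s then (1 : ℝ) else 0) :=
    intervalIntegral.integral_nonneg hut fun _ _ => by split_ifs <;> norm_num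
  exact sub_le_self _ (mul_nonneg hS hI)

theorem sub_mul_le (hW : IsSedimentTrajectory S w W) (hS : 0 ≤ S) (ht : 0 ≤ t) :
    w - S * t ≤ W t := by
  have hI : ∫ s in (0 : ℝ)..t, (if 0 < W s then (1 : ℝ) else 0) ≤ t := by
    simpa using intervalIntegral.integral_mono_on (g := fun _ => 1) ht (hW.intervalIntegrable le_rfl ht)
      intervalIntegrable_const fun x _ => by split_ifs <;> norm_num
  rw [hW.2 t ht]
  gcongr

theorem eq_sub_mul_of_mul_le (hW : IsSedimentTrajectory S w W) (hS : 0 < S) (ht : 0 ≤ t)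
    (htw : S * t ≤ w) : W t = w - S * t := by
  have hpos : EqOn (fun s => if 0 < W s then (1 : ℝ) else 0) (fun _ => 1) (Ioo 0 t) :=
    fun s hs => if_pos <| by
      nlinarith [hW.sub_mul_le hS.le hs.1.le, mul_lt_mul_of_pos_left hs.2 hS]
  rw [hW.2 t ht, intervalIntegral_eq_of_eqOn_Ioo ht hpos]
  ring

theorem eq_of_nonpos (hW : IsSedimentTrajectory S w W) (hS : 0 ≤ S) (hu : 0 ≤ u) (hut : u ≤ t)
    (hWu : W u ≤ 0) : W t = W u := by
  have hzero : EqOn (fun s => if 0 < W s then (1 : ℝ) else 0) (fun _ => 0) (Ioo u t) :=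
    fun s hs => if_neg <| not_lt.2 <|
      (hW.antitoneOn hS hu (mem_Ici.2 (hu.trans hs.1.le)) hs.1.le).trans hWu
  rw [hW.eq_sub_integral hu (hu.trans hut), intervalIntegral_eq_of_eqOn_Ioo hut hzero]
  ring

end IsSedimentTrajectory

/-- uniqueness of the Filippov solution of the sediment storage dynamics:
any trajectory started at `w ≥ 0` equals `max{0, w − S·t}`. -/
theorem sediment_trajectory_unique (S w : ℝ) (hS : 0 < S) (hw : 0 ≤ w)
    (W : ℝ → ℝ) (hW : IsSedimentTrajectory S w W) :
    ∀ t ≥ (0:ℝ), W t = max 0 (w - S * t) := by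
  intro t ht
  rcases le_or_gt (S * t) w with htw | htw
  · rw [hW.eq_sub_mul_of_mul_le hS ht htw, max_eq_right (sub_nonneg.2 htw)]
  · have hT0 : 0 ≤ w / S := div_nonneg hw hS.le
    have hST : S * (w / S) = w := mul_div_cancel₀ w hS.ne'
    have hWT : W (w / S) = 0 := by
      rw [hW.eq_sub_mul_of_mul_le hS hT0 hST.le, hST, sub_self]
    have hTt : w / S ≤ t := (div_le_iff₀' hS).2 htw.le
    rw [hW.eq_of_nonpos hS.le hT0 hTt hWT.le, hWT, max_eq_left (by linarith)]
end

section
/- Invariance of the reservoir volume under boundary-modulated outflow: if y ∈ [0,Ȳ] and for every t ≥ 0 one has (Y(t) ≤ 0 → q(t) ≤ Q(t)) and (Y(t) ≥ Ȳ → q(t) ≥ Q(t)), then 0 ≤ Y(t) ≤ Ȳ for all t ≥ 0. -/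
open Set MeasureTheory intervalIntegral

private lemma reservoir_aux (Ybar y : ℝ) (f : ℝ → ℝ)
    (hy : y ≤ Ybar) (hf : ContinuousOn f (Ici 0))
    (hbd : ∀ t ≥ (0:ℝ), Ybar ≤ y + ∫ s in (0:ℝ)..t, f s → f t ≤ 0) :
    ∀ t ≥ (0:ℝ), y + ∫ s in (0:ℝ)..t, f s ≤ Ybar := by
  intro t ht
  by_contra hlt
  push_neg at hlt
  set Y : ℝ → ℝ := fun u => y + ∫ s in (0:ℝ)..u, f s with hYdef
  have hint : ∀ a b : ℝ, 0 ≤ a → 0 ≤ b → IntervalIntegrable f volume a b := by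
    intro a b ha hb
    exact (hf.mono (fun x hx => le_trans (le_min ha hb) hx.1)).intervalIntegrable
  have hYcont : ContinuousOn Y (Icc 0 t) := by
    have h1 : IntegrableOn f (uIcc 0 t) volume := by
      rw [uIcc_of_le ht]
      exact (hf.mono (fun x hx => hx.1)).integrableOn_compact isCompact_Icc
    have := continuousOn_primitive_interval (a := (0:ℝ)) (b := t) h1
    rw [uIcc_of_le ht] at this
    exact continuousOn_const.add this
  set S := {u | u ∈ Icc 0 t ∧ Y u ≤ Ybar} with hSdef
  have h0S : (0:ℝ) ∈ S := by
    refine ⟨⟨le_rfl, ht⟩, ?_⟩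
    show y + ∫ s in (0:ℝ)..(0:ℝ), f s ≤ Ybar
    simp [hy]
  have hSne : S.Nonempty := ⟨0, h0S⟩
  have hSbdd : BddAbove S := ⟨t, fun u hu => hu.1.2⟩
  have hclosed : IsClosed S := by
    have : S = Icc 0 t ∩ Y ⁻¹' (Iic Ybar) := by
      ext u; simp only [hSdef, Set.mem_setOf_eq, Set.mem_inter_iff, Set.mem_preimage, Set.mem_Iic]
    rw [this]
    exact hYcont.preimage_isClosed_of_isClosed isClosed_Icc isClosed_Iic
  set c := sSup S with hcdef
  have hcS : c ∈ S := hclosed.csSup_mem hSne hSbdd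
  have hc0 : 0 ≤ c := hcS.1.1
  have hct : c ≤ t := hcS.1.2
  have hcY : Y c ≤ Ybar := hcS.2
  have hclt : c < t := by
    rcases lt_or_eq_of_le hct with h | h
    · exact h
    · exfalso; rw [h] at hcY; exact absurd hcY (not_le.mpr hlt)
  have hfle : ∀ u ∈ Ioc c t, f u ≤ 0 := by
    intro u hu
    have hu0 : 0 ≤ u := le_trans hc0 hu.1.le
    refine hbd u hu0 ?_
    by_contra h
    push_neg at h
    have huS : u ∈ S := ⟨⟨hu0, hu.2⟩, h.le⟩
    exact absurd (le_csSup hSbdd huS) (not_le.mpr hu.1)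
  have hadd : (∫ s in (0:ℝ)..c, f s) + ∫ s in c..t, f s = ∫ s in (0:ℝ)..t, f s :=
    intervalIntegral.integral_add_adjacent_intervals (hint 0 c le_rfl hc0)
      (hint c t hc0 (le_trans hc0 hct))
  have hnonpos : (∫ s in c..t, f s) ≤ 0 := by
    rw [intervalIntegral.integral_of_le hct]
    exact MeasureTheory.setIntegral_nonpos measurableSet_Ioc hfle
  have : Y t ≤ Ybar := by
    have : Y t = Y c + ∫ s in c..t, f s := by
      simp only [hYdef]; rw [← hadd]; ring
    rw [this]; linarith
  exact absurd this (not_le.mpr hlt)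

/-- invariance of the reservoir volume `Y(t) = y + ∫₀ᵗ (Q(s) − q(s)) ds`
under boundary-modulated outflow: if the outflow does not exceed the inflow when the
reservoir is empty and is at least the inflow when it is full, then `0 ≤ Y(t) ≤ Ȳ`
for all `t ≥ 0`. -/
theorem reservoir_volume_invariance
    (Ybar y : ℝ) (Q q : ℝ → ℝ)
    (hYbar : 0 < Ybar) (hy : y ∈ Icc 0 Ybar)
    (hQ : ContinuousOn Q (Ici 0)) (hq : ContinuousOn q (Ici 0))
    (hbd : ∀ t ≥ (0:ℝ),
      ((y + ∫ s in (0:ℝ)..t, (Q s - q s)) ≤ 0 → q t ≤ Q t) ∧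
      (Ybar ≤ (y + ∫ s in (0:ℝ)..t, (Q s - q s)) → Q t ≤ q t)) :
    ∀ t ≥ (0:ℝ), (y + ∫ s in (0:ℝ)..t, (Q s - q s)) ∈ Icc 0 Ybar := by
  intro t ht
  have hint : ∀ u : ℝ, 0 ≤ u → IntervalIntegrable (fun s => Q s - q s) volume 0 u := by
    intro u hu
    exact ((hQ.sub hq).mono (fun x hx => le_trans (le_min le_rfl hu) hx.1)).intervalIntegrable
  have hneg : ∀ u : ℝ, 0 ≤ u →
      (∫ s in (0:ℝ)..u, (q s - Q s)) = -∫ s in (0:ℝ)..u, (Q s - q s) := by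
    intro u hu
    rw [← intervalIntegral.integral_neg]
    congr 1; ext s; ring
  constructor
  · -- lower bound via aux applied to f = q - Q, starting value Ybar - y
    have := reservoir_aux Ybar (Ybar - y) (fun s => q s - Q s)
      (by linarith [hy.1]) (hq.sub hQ)
      (by
        intro u hu hle
        rw [hneg u hu] at hle
        have h0 : (y + ∫ s in (0:ℝ)..u, (Q s - q s)) ≤ 0 := by linarith
        have := (hbd u hu).1 h0
        simpa using sub_nonpos.mpr this) t ht
    rw [hneg t ht] at this
    linarith
  · exact reservoir_aux Ybar y (fun s => Q s - q s) hy.2 (hQ.sub hq)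
      (fun u hu hle => sub_nonpos.mpr ((hbd u hu).2 hle)) t ht
end
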